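/- arXiv:1805.00800 — 3 statements merged into one kernel-verified Lean document; each statement's English description precedes it below -/
import Mathlib

section
/- (Cassels' inhomogeneous transference theorem.) Let n ≥ 1, let ω ∈ ℝⁿ and let L(x) = ω₁x₁ + … + ωₙxₙ be the associated linear form. Let A, X > 0 and suppose that there is no x ∈ ℤⁿ \ {0} with ‖L(x)‖ ≤ A and |x_i| ≤ X for all i. Then for every a ∈ ℝ there exists x ∈ ℤⁿ with ‖L(x) − a‖ ≤ A₁ and |x_i| ≤ X₁ for all i, where h = X^{−n}A^{−1}, A₁ = (h+1)A/2 and X₁ = (h+1)X/2. -/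
/-- `distInt t` is the distance from the real number `t` to the nearest integer,
`‖t‖ = min_{p ∈ ℤ} |t − p|`. -/
noncomputable def distInt (t : ℝ) : ℝ := |t - round t|

/-!
Let `q = ⌊X⌋` and `B = [0, q]ⁿ`, a box of `(q + 1)ⁿ ≥ Xⁿ` integer points. By hypothesis the values
`L(y)`, `y ∈ B`, are pairwise more than `A` apart on the circle `ℝ/ℤ` (as `y - y'` has entries of
size at most `X`), so the arcs of length `A` centred at them are disjoint and have total length
`(q + 1)ⁿ A`. By Cauchy–Davenport, the `k`-fold sumset of this union of arcs covers the circle as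
soon as `k (q + 1)ⁿ A > 1`: every `a` lies within `k A / 2` of some `L(x)` with
`x ∈ k • B ⊆ [0, kq]ⁿ`, and centring `x` gives the theorem for the least such `k`. To apply
Cauchy–Davenport the circle is discretised at a prime resolution `N`, where the arcs become sets of
`2 ⌊N A / 2⌋ + 1` residues in `ZMod N`, and then `N → ∞`.
-/

open Finset Filter
open scoped Pointwise

lemma distInt_le_abs_sub (t : ℝ) (m : ℤ) : distInt t ≤ |t - m| := round_le t m

lemma distInt_le_half (t : ℝ) : distInt t ≤ 1 / 2 := abs_sub_round t

lemma le_of_frequently_le_add_div {a b c : ℝ} (h : ∃ᶠ N : ℕ in atTop, a ≤ b + c / N) : a ≤ b := by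
  refine le_of_tendsto_of_frequently (f := fun N : ℕ => a - c / N) ?_ (h.mono fun N hN => ?_)
  · simpa using (tendsto_const_div_atTop_nhds_zero_nat c).const_sub a
  · linarith

lemma exists_gt_and_pairwise_le {α : Type*} {s : Finset α} {f : α → α → ℝ} {A : ℝ}
    (h : (s : Set α).Pairwise fun x y => A < f x y) :
    ∃ δ, A < δ ∧ (s : Set α).Pairwise fun x y => δ ≤ f x y := by
  rcases s.offDiag.eq_empty_or_nonempty with hs | hs
  · refine ⟨A + 1, by linarith, fun x hx y hy hne => ?_⟩
    simpa [hs] using (mem_offDiag (x := (x, y))).2 ⟨hx, hy, hne⟩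
  · obtain ⟨p, hp, hmin⟩ := s.offDiag.exists_min_image (fun p => f p.1 p.2) hs
    obtain ⟨hp₁, hp₂, hne⟩ := mem_offDiag.1 hp
    exact ⟨_, h hp₁ hp₂ hne, fun x hx y hy hne' => hmin (x, y) (mem_offDiag.2 ⟨hx, hy, hne'⟩)⟩

lemma Finset.nsmul_Icc_subset {α : Type*} [AddCommMonoid α] [PartialOrder α] [IsOrderedAddMonoid α]
    [LocallyFiniteOrder α] [DecidableEq α] (a b : α) : ∀ k : ℕ, k • Icc a b ⊆ Icc (k • a) (k • b)
  | 0 => by rw [zero_nsmul, zero_nsmul, zero_nsmul]; exact singleton_subset_iff.2 (by simp)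
  | k + 1 => by
    simp only [succ_nsmul]
    exact (add_subset_add_right (nsmul_Icc_subset a b k)).trans (Icc_add_Icc_subset _ _ _ _)

lemma ZMod.min_le_card_nsmul {p : ℕ} (hp : p.Prime) {S : Finset (ZMod p)} (hS : S.Nonempty) :
    ∀ k : ℕ, min p (k * (#S - 1) + 1) ≤ #(k • S)
  | 0 => by simp
  | k + 1 => by
    have hcd := ZMod.cauchy_davenport hp (hS.nsmul (n := k)) hS
    have ih := ZMod.min_le_card_nsmul hp hS k
    have hS₀ := hS.card_pos
    rw [succ_nsmul]
    grind

lemma ZMod.nsmul_eq_univ {p : ℕ} [Fact p.Prime] {S : Finset (ZMod p)} (hS : S.Nonempty) {k : ℕ}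
    (hk : p ≤ k * (#S - 1) + 1) : k • S = univ := by
  refine eq_univ_of_card _ (le_antisymm (card_le_univ _) ?_)
  simpa [ZMod.card, hk] using ZMod.min_le_card_nsmul Fact.out hS k

/-- `z` represents the point `u` of `ℝ/ℤ` at resolution `1 / N`, with error at most `c / N`. -/
def ApproxMod (N : ℕ) (u c : ℝ) (z : ZMod N) : Prop :=
  ∃ E : ℤ, (E : ZMod N) = z ∧ |E - N * u| ≤ c

namespace ApproxMod

variable {N : ℕ} {u u' c c' : ℝ} {z z' : ZMod N}

lemma zero : ApproxMod N 0 0 0 := ⟨0, by simp, by simp⟩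

lemma add (h : ApproxMod N u c z) (h' : ApproxMod N u' c' z') :
    ApproxMod N (u + u') (c + c') (z + z') := by
  obtain ⟨E, rfl, hE⟩ := h
  obtain ⟨E', rfl, hE'⟩ := h'
  refine ⟨E + E', by push_cast; rfl, ?_⟩
  calc |((E + E' : ℤ) : ℝ) - N * (u + u')| = |(E - N * u) + (E' - N * u')| := by push_cast; ring_nf
    _ ≤ c + c' := (abs_add_le _ _).trans (add_le_add hE hE')

lemma mul_distInt_sub_le (h : ApproxMod N u c z) (h' : ApproxMod N u' c' z) :
    N * distInt (u - u') ≤ c + c' := by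
  obtain ⟨E, rfl, hE⟩ := h
  obtain ⟨E', hEE', hE'⟩ := h'
  obtain ⟨m, hm⟩ := (ZMod.intCast_eq_intCast_iff_dvd_sub _ _ _).1 hEE'
  have hm' : (E : ℝ) - E' = N * m := by exact_mod_cast hm
  calc (N : ℝ) * distInt (u - u') ≤ N * |u - u' - m| := by
        gcongr; exact distInt_le_abs_sub _ _
    _ = |N * (u - u' - m)| := by rw [abs_mul, Nat.abs_cast]
    _ = |(E' - N * u') - (E - N * u)| := by congr 1; linear_combination hm'
    _ ≤ c' + c := (abs_sub _ _).trans (add_le_add hE' hE)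
    _ = c + c' := add_comm _ _

end ApproxMod

lemma approxMod_round (N : ℕ) (u : ℝ) : ApproxMod N u (1 / 2) (round (N * u) : ℤ) :=
  ⟨_, rfl, by rw [abs_sub_comm]; exact abs_sub_round _⟩

lemma exists_mem_nsmul_approxMod {V : Type*} [AddCommMonoid V] [DecidableEq V] (L : V →+ ℝ)
    {N : ℕ} {B : Finset V} {S : Finset (ZMod N)} {c : ℝ}
    (hS : ∀ z ∈ S, ∃ y ∈ B, ApproxMod N (L y) c z) :
    ∀ k : ℕ, ∀ z ∈ k • S, ∃ x ∈ k • B, ApproxMod N (L x) (k * c) z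
  | 0, z, hz => ⟨0, by simp, by simpa [Finset.mem_zero.1 (by simpa using hz)] using ApproxMod.zero⟩
  | k + 1, z, hz => by
    rw [succ_nsmul, Finset.mem_add] at hz
    obtain ⟨z₁, hz₁, z₂, hz₂, rfl⟩ := hz
    obtain ⟨x, hx, hxz⟩ := exists_mem_nsmul_approxMod L hS k z₁ hz₁
    obtain ⟨y, hy, hyz⟩ := hS z₂ hz₂
    refine ⟨x + y, by rw [succ_nsmul]; exact add_mem_add hx hy, ?_⟩
    simpa [add_mul] using hxz.add hyz

section Discretisation

variable {V : Type*} [AddCommMonoid V] (L : V →+ ℝ) {B : Finset V} {N J : ℕ}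

/-- The pair `(y, j)` codes the point `L y + j / N` of the circle `ℝ/ℤ` in resolution `1 / N`. -/
noncomputable def gridCode (N : ℕ) (p : V × ℤ) : ZMod N := ((round (N * L p.1) + p.2 : ℤ) : ZMod N)

lemma approxMod_gridCode (y : V) {j : ℤ} (hj : j ∈ Icc (-J : ℤ) J) :
    ApproxMod N (L y) (J + 1 / 2) (gridCode L N (y, j)) := by
  refine ⟨_, rfl, ?_⟩
  replace hj : |(j : ℝ)| ≤ J := by
    rw [abs_le]; exact_mod_cast mem_Icc.1 hj
  calc |((round (N * L y) + j : ℤ) : ℝ) - N * L y|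
      = |((round (N * L y) : ℝ) - N * L y) + j| := by push_cast; ring_nf
    _ ≤ 1 / 2 + J := (abs_add_le _ _).trans
        (add_le_add (by rw [abs_sub_comm]; exact abs_sub_round _) hj)
    _ = J + 1 / 2 := add_comm _ _

variable {L}

lemma injOn_gridCode (hJ : 2 * J < N)
    (hsep : (B : Set V).Pairwise fun y y' => 2 * J + 1 < N * distInt (L y - L y')) :
    Set.InjOn (gridCode L N) ↑(B ×ˢ Icc (-J : ℤ) J) := by
  rintro ⟨y, j⟩ hp ⟨y', j'⟩ hp' hcode
  rw [mem_coe] at hp hp'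
  have hy : y = y' := by
    by_contra hne
    have := (approxMod_gridCode L y (mem_product.1 hp).2).mul_distInt_sub_le
      (hcode ▸ approxMod_gridCode L y' (mem_product.1 hp').2)
    linarith [hsep (mem_product.1 hp).1 (mem_product.1 hp').1 hne]
  subst hy
  obtain ⟨-, hj⟩ := mem_product.1 hp
  obtain ⟨-, hj'⟩ := mem_product.1 hp'
  rw [mem_Icc] at hj hj'
  have hdvd : (N : ℤ) ∣ j' - j := by
    simpa using (ZMod.intCast_eq_intCast_iff_dvd_sub _ _ _).1 hcode
  have : j' - j = 0 := Int.eq_zero_of_abs_lt_dvd hdvd (by rw [abs_lt]; omega)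
  simp only [Prod.mk.injEq, true_and]
  omega

lemma card_mul_two_mul_add_one_le (hJ : 2 * J < N)
    (hsep : (B : Set V).Pairwise fun y y' => 2 * J + 1 < N * distInt (L y - L y')) :
    #B * (2 * J + 1) ≤ N := by
  have : NeZero N := ⟨by omega⟩
  have hcard : #(Icc (-J : ℤ) J) = 2 * J + 1 := by simp [Int.card_Icc]; omega
  calc #B * (2 * J + 1) = #((B ×ˢ Icc (-J : ℤ) J).image (gridCode L N)) := by
        rw [card_image_of_injOn (injOn_gridCode hJ hsep), card_product, hcard]
    _ ≤ N := (card_le_univ _).trans_eq (ZMod.card N)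

lemma exists_mem_nsmul_mul_distInt_le [DecidableEq V] [Fact N.Prime] (hJ : 2 * J < N)
    (hsep : (B : Set V).Pairwise fun y y' => 2 * J + 1 < N * distInt (L y - L y'))
    {k : ℕ} (hk : N ≤ k * (#B * (2 * J + 1) - 1) + 1) (t : ℝ) :
    ∃ x ∈ k • B, N * distInt (L x - t) ≤ k * (J + 1 / 2) + 1 / 2 := by
  have hB : B.Nonempty := nonempty_iff_ne_empty.2 fun hB => by
    simp only [hB, card_empty, zero_mul, Nat.zero_sub, mul_zero, zero_add] at hk
    exact (Fact.out : N.Prime).one_lt.not_ge hk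
  set S := (B ×ˢ Icc (-J : ℤ) J).image (gridCode L N)
  have hS : S.Nonempty := (hB.product ⟨0, by simp⟩).image _
  have hcard : #S = #B * (2 * J + 1) := by
    rw [card_image_of_injOn (injOn_gridCode hJ hsep), card_product]
    simp [Int.card_Icc]; omega
  have hSapprox : ∀ z ∈ S, ∃ y ∈ B, ApproxMod N (L y) (J + 1 / 2) z := by
    simp only [S, mem_image]
    rintro _ ⟨p, hp, rfl⟩
    exact ⟨p.1, (mem_product.1 hp).1, approxMod_gridCode L p.1 (mem_product.1 hp).2⟩
  obtain ⟨x, hx, hxt⟩ := exists_mem_nsmul_approxMod L hSapprox k _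
    (ZMod.nsmul_eq_univ hS (hcard ▸ hk) ▸ mem_univ ((round (N * t) : ℤ) : ZMod N))
  exact ⟨x, hx, hxt.mul_distInt_sub_le (approxMod_round N t)⟩

end Discretisation

section Covering

variable {V : Type*} [AddCommMonoid V] {L : V →+ ℝ} {B : Finset V} {A : ℝ}

lemma eventually_discretisation (hA : 0 ≤ A) (hA1 : A < 1)
    (hsep : (B : Set V).Pairwise fun y y' => A < distInt (L y - L y')) :
    ∀ᶠ N : ℕ in atTop, 2 * ⌊N * A / 2⌋₊ < N ∧
      (B : Set V).Pairwise fun y y' => 2 * ⌊N * A / 2⌋₊ + 1 < N * distInt (L y - L y') := by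
  obtain ⟨δ, hAδ, hδ⟩ := exists_gt_and_pairwise_le hsep
  have hlarge : ∀ᶠ N : ℕ in atTop, 1 < (N : ℝ) * (δ - A) :=
    (tendsto_natCast_atTop_atTop.atTop_mul_const (sub_pos.2 hAδ)).eventually_gt_atTop 1
  filter_upwards [hlarge, eventually_gt_atTop 0] with N hN hN0
  have hJ : (2 * ⌊N * A / 2⌋₊ : ℝ) ≤ N * A := by
    linarith [Nat.floor_le (show 0 ≤ (N : ℝ) * A / 2 by positivity)]
  have hN0' : (0 : ℝ) < N := by exact_mod_cast hN0
  refine ⟨?_, fun y hy y' hy' hne => ?_⟩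
  · exact_mod_cast hJ.trans_lt (by nlinarith : (N : ℝ) * A < N)
  · nlinarith [hδ hy hy' hne]

lemma card_mul_le_one (hA : 0 ≤ A) (hA1 : A < 1)
    (hsep : (B : Set V).Pairwise fun y y' => A < distInt (L y - L y')) : #B * A ≤ 1 := by
  refine le_of_frequently_le_add_div (c := #B) (Eventually.frequently ?_)
  filter_upwards [eventually_discretisation hA hA1 hsep, eventually_gt_atTop 0]
    with N ⟨hJ, hsepN⟩ hN0
  have hcard : (#B * (2 * ⌊N * A / 2⌋₊ + 1) : ℝ) ≤ N := by
    exact_mod_cast card_mul_two_mul_add_one_le hJ hsepN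
  have hfloor := Nat.lt_floor_add_one ((N : ℝ) * A / 2)
  have hN0' : (0 : ℝ) < N := by exact_mod_cast hN0
  rw [← sub_le_iff_le_add', le_div_iff₀ hN0']
  nlinarith [(#B).cast_nonneg (α := ℝ)]

theorem exists_mem_nsmul_distInt_le [DecidableEq V] (hA : 0 ≤ A) (hA1 : A < 1)
    (hsep : (B : Set V).Pairwise fun y y' => A < distInt (L y - L y')) {k : ℕ} (hk : 1 < k * #B * A)
    (t : ℝ) : ∃ x ∈ k • B, distInt (L x - t) ≤ k * A / 2 := by
  have hB : B.Nonempty := card_pos.1 <| Nat.pos_of_ne_zero fun h => by simp [h] at hk; linarith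
  obtain ⟨x, hx, hmin⟩ := (k • B).exists_min_image (fun x => distInt (L x - t)) hB.nsmul
  refine ⟨x, hx, le_of_frequently_le_add_div (c := (k + 1) / 2) ?_⟩
  have hprimes : ∃ᶠ N : ℕ in atTop, N.Prime :=
    Nat.frequently_atTop_iff_infinite.2 Nat.infinite_setOfPred_prime
  have hlarge : ∀ᶠ N : ℕ in atTop, (k * #B + k : ℝ) ≤ N * (k * #B * A - 1) :=
    (tendsto_natCast_atTop_atTop.atTop_mul_const (sub_pos.2 hk)).eventually_ge_atTop _
  refine (hprimes.and_eventually ((eventually_discretisation hA hA1 hsep).and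
    (hlarge.and (eventually_gt_atTop 0)))).mono ?_
  rintro N ⟨hp, ⟨hJ, hsepN⟩, hNk, hN0⟩
  have : Fact N.Prime := ⟨hp⟩
  set J := ⌊(N : ℝ) * A / 2⌋₊
  have hJ₁ : (2 * J : ℝ) ≤ N * A := by
    linarith [Nat.floor_le (show 0 ≤ (N : ℝ) * A / 2 by positivity)]
  have hJ₂ : (N : ℝ) * A < 2 * J + 2 := by linarith [Nat.lt_floor_add_one ((N : ℝ) * A / 2)]
  have hN0' : (0 : ℝ) < N := by exact_mod_cast hN0
  have hk' : N ≤ k * (#B * (2 * J + 1) - 1) + 1 := by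
    have h1 : 1 ≤ #B * (2 * J + 1) := Nat.one_le_iff_ne_zero.2 (by positivity)
    rw [← Nat.cast_le (α := ℝ)]
    push_cast [Nat.cast_sub h1]
    nlinarith [Nat.cast_nonneg (α := ℝ) k, Nat.cast_nonneg (α := ℝ) (#B),
      mul_nonneg (Nat.cast_nonneg (α := ℝ) k) (Nat.cast_nonneg (α := ℝ) (#B))]
  obtain ⟨y, hy, hyt⟩ := exists_mem_nsmul_mul_distInt_le hJ hsepN hk' t
  refine (hmin y hy).trans (le_of_mul_le_mul_left ?_ hN0')
  rw [mul_add, mul_div_cancel₀ _ hN0'.ne']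
  nlinarith [Nat.cast_nonneg (α := ℝ) k]

end Covering

lemma card_Icc_zero_const {ι : Type*} [Fintype ι] [DecidableEq ι] (q : ℕ) :
    #(Icc (0 : ι → ℤ) fun _ => q) = (q + 1) ^ Fintype.card ι := by
  simp [Pi.card_Icc, Int.card_Icc]

lemma abs_sub_ediv_two_le {m x : ℤ} (hx₀ : 0 ≤ x) (hxm : x ≤ m) :
    |((x - m / 2 : ℤ) : ℝ)| ≤ (m + 1) / 2 := by
  have h : |((2 * (x - m / 2) : ℤ) : ℝ)| ≤ m + 1 := by
    exact_mod_cast abs_le.2 ⟨by omega, by omega⟩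
  rw [Int.cast_mul, abs_mul] at h
  norm_num at h
  push_cast
  linarith

lemma exists_nat_one_lt_mul_le_inv_add_one {b : ℝ} (hb : 0 < b) :
    ∃ k : ℕ, 1 < k * b ∧ (k : ℝ) ≤ b⁻¹ + 1 := by
  refine ⟨⌊b⁻¹⌋₊ + 1, ?_, ?_⟩
  · rw [← inv_lt_iff_one_lt_mul₀ hb]
    exact_mod_cast Nat.lt_floor_add_one b⁻¹
  · push_cast
    linarith [Nat.floor_le (inv_nonneg.2 hb.le)]

lemma mul_le_of_le_inv_add_one {n : ℕ} {A X m κ : ℝ} (hA : 0 < A) (hX : 0 < X) (hXm : X ^ n ≤ m)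
    (hκ : κ ≤ (m * A)⁻¹ + 1) : κ * A ≤ ((X ^ n)⁻¹ * A⁻¹ + 1) * A := by
  have hm : 0 < m := (pow_pos hX n).trans_le hXm
  calc κ * A ≤ ((m * A)⁻¹ + 1) * A := by gcongr
    _ = m⁻¹ + A := by field_simp
    _ ≤ (X ^ n)⁻¹ + A := by gcongr
    _ = ((X ^ n)⁻¹ * A⁻¹ + 1) * A := by field_simp

lemma mul_add_one_le_of_le_inv_add_one {n : ℕ} (hn : n ≠ 0) {A X q κ : ℝ} (hA : 0 < A)
    (hX : 0 < X) (hq : 0 ≤ q) (hqX : q ≤ X) (hXq : X ≤ q + 1) (hqA : (q + 1) ^ n * A ≤ 1)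
    (hκ : κ ≤ ((q + 1) ^ n * A)⁻¹ + 1) :
    κ * q + 1 ≤ ((X ^ n)⁻¹ * A⁻¹ + 1) * X := by
  set m := (q + 1) ^ n
  have hXn : 0 < X ^ n := pow_pos hX n
  have hmA : 0 < m * A := by positivity
  have hpow : (q + 1) * X ^ n ≤ X * m := by
    have := le_self_pow₀ ((one_le_div hX).2 hXq) hn
    rw [div_pow, div_le_div_iff₀ hX hXn] at this
    linarith
  calc κ * q + 1 ≤ (m * A)⁻¹ * q + (q + 1 - X) + X := by
        nlinarith [mul_le_mul_of_nonneg_right hκ hq]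
    _ ≤ (m * A)⁻¹ * q + (q + 1 - X) / (m * A) + X := by
        gcongr
        exact le_div_self (by linarith) hmA hqA
    _ = (2 * q + 1 - X) / (m * A) + X := by field_simp; ring
    _ ≤ X / (X ^ n * A) + X := by
        gcongr ?_ + X
        rw [div_le_div_iff₀ hmA (by positivity)]
        have h2q : 2 * q + 1 - X ≤ q + 1 := by linarith
        nlinarith [mul_le_mul_of_nonneg_right hpow hA.le,
          mul_le_mul_of_nonneg_right h2q (by positivity : 0 ≤ X ^ n * A)]
    _ = ((X ^ n)⁻¹ * A⁻¹ + 1) * X := by field_simp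

def linearForm {ι : Type*} [Fintype ι] (ω : ι → ℝ) : (ι → ℤ) →+ ℝ where
  toFun x := ∑ i, ω i * x i
  map_zero' := by simp
  map_add' x y := by simp [mul_add, sum_add_distrib]

lemma linearForm_apply {ι : Type*} [Fintype ι] (ω : ι → ℝ) (x : ι → ℤ) :
    linearForm ω x = ∑ i, ω i * x i := rfl

lemma pairwise_lt_distInt_linearForm_sub {ι : Type*} [Fintype ι] [DecidableEq ι] {ω : ι → ℝ}
    {A X : ℝ} {q : ℕ} (hqX : (q : ℝ) ≤ X)
    (h : ¬ ∃ x : ι → ℤ, x ≠ 0 ∧ distInt (∑ i, ω i * (x i : ℝ)) ≤ A ∧ ∀ i, (|x i| : ℝ) ≤ X) :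
    (↑(Icc (0 : ι → ℤ) fun _ => q) : Set (ι → ℤ)).Pairwise fun y y' =>
      A < distInt (linearForm ω y - linearForm ω y') := by
  intro y hy y' hy' hne
  by_contra! hle
  refine h ⟨y - y', sub_ne_zero.2 hne, by rwa [← map_sub] at hle, fun i => ?_⟩
  have : |(y - y') i| ≤ q := by
    have := (mem_Icc.1 hy).1 i; have := (mem_Icc.1 hy).2 i
    have := (mem_Icc.1 hy').1 i; have := (mem_Icc.1 hy').2 i
    rw [Pi.sub_apply, abs_le]
    simp only [Pi.zero_apply] at *
    omega
  rw [← Int.cast_abs]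
  exact (Int.cast_le.2 this).trans (by simpa using hqX)

theorem cassels_inhomogeneous_general (n : ℕ) (ω : Fin n → ℝ)
    (A X : ℝ) (hA : 0 < A) (hX : 0 < X)
    (h : ¬ ∃ x : Fin n → ℤ, x ≠ 0 ∧
      distInt (∑ i, ω i * (x i : ℝ)) ≤ A ∧ ∀ i, (|x i| : ℝ) ≤ X) :
    ∀ a : ℝ, ∃ x : Fin n → ℤ,
      distInt (∑ i, ω i * (x i : ℝ) - a) ≤ ((X ^ n)⁻¹ * A⁻¹ + 1) * A / 2 ∧
      ∀ i, (|x i| : ℝ) ≤ ((X ^ n)⁻¹ * A⁻¹ + 1) * X / 2 := by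
  intro a
  rcases le_or_gt 1 ((X ^ n)⁻¹ + A) with hbig | hsmall
  · refine ⟨0, (distInt_le_half _).trans ?_, fun i => by simp; positivity⟩
    rw [show ((X ^ n)⁻¹ * A⁻¹ + 1) * A = (X ^ n)⁻¹ + A by field_simp]
    linarith
  have hXn : 1 < X ^ n := by rw [← inv_lt_one₀ (by positivity)]; linarith
  have hn : n ≠ 0 := by rintro rfl; simp at hXn
  have hA1 : A < 1 := by linarith [inv_pos.2 (pow_pos hX n)]
  set q := ⌊X⌋₊
  have hqX : (q : ℝ) ≤ X := Nat.floor_le hX.le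
  have hXq : X ≤ q + 1 := (Nat.lt_floor_add_one X).le
  have hsep := pairwise_lt_distInt_linearForm_sub hqX h
  have hqA : ((q : ℝ) + 1) ^ n * A ≤ 1 := by
    simpa [card_Icc_zero_const] using card_mul_le_one hA.le hA1 hsep
  obtain ⟨k, hk, hk'⟩ :=
    exists_nat_one_lt_mul_le_inv_add_one (by positivity : (0 : ℝ) < (q + 1) ^ n * A)
  set c : ℤ := k * q / 2
  obtain ⟨x, hxB, hx⟩ := exists_mem_nsmul_distInt_le hA.le hA1 hsep (k := k)
    (by simpa [card_Icc_zero_const, mul_assoc] using hk) (a + linearForm ω fun _ => c)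
  obtain ⟨hx₀, hxk⟩ := mem_Icc.1 (nsmul_Icc_subset _ _ k hxB)
  refine ⟨x - fun _ => c, ?_, fun i => ?_⟩
  · have hL : ∑ i, ω i * ((x - fun _ => c : Fin n → ℤ) i : ℝ) - a
        = linearForm ω x - (a + linearForm ω fun _ => c) := by
      rw [← linearForm_apply, map_sub]; ring
    rw [hL]
    exact hx.trans (div_le_div_of_nonneg_right (mul_le_of_le_inv_add_one hA hX (by gcongr) hk')
      zero_le_two)
  · refine (abs_sub_ediv_two_le (hx₀ i) (by simpa using hxk i)).trans ?_
    gcongr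
    push_cast
    exact mul_add_one_le_of_le_inv_add_one hn hA hX q.cast_nonneg hqX hXq hqA hk'

/-- Cassels' inhomogeneous transference theorem: if the linear form
`L(x) = ω₁x₁ + ⋯ + ωₙxₙ` admits no nonzero integer vector `x` with `‖L(x)‖ ≤ A` and
`|xᵢ| ≤ X`, then for every `a ∈ ℝ` there is an integer vector `x` with
`‖L(x) − a‖ ≤ A₁ = (h+1)A/2` and `|xᵢ| ≤ X₁ = (h+1)X/2`, where `h = X⁻ⁿA⁻¹`. -/
theorem cassels_inhomogeneous (n : ℕ) (hn : 1 ≤ n) (ω : Fin n → ℝ)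
    (A X : ℝ) (hA : 0 < A) (hX : 0 < X)
    (h : ¬ ∃ x : Fin n → ℤ, x ≠ 0 ∧
      distInt (∑ i, ω i * (x i : ℝ)) ≤ A ∧ ∀ i, (|x i| : ℝ) ≤ X) :
    ∀ a : ℝ, ∃ x : Fin n → ℤ,
      distInt (∑ i, ω i * (x i : ℝ) - a) ≤ ((X ^ n)⁻¹ * A⁻¹ + 1) * A / 2 ∧
      ∀ i, (|x i| : ℝ) ≤ ((X ^ n)⁻¹ * A⁻¹ + 1) * X / 2 :=
  cassels_inhomogeneous_general n ω A X hA hX h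
end

section
/- Let γ ∈ (0,1] and let ω ∈ B_γ. Then the finite orbit segment {qω mod 1 : q ∈ ℤ, |q| ≤ γ^{−2}} is γ-dense in ℝ/ℤ: for every a ∈ ℝ there exists an integer q with |q| ≤ γ^{−2} and ‖qω − a‖ ≤ γ. -/
/-!
Dirichlet's theorem at the scales `γ⁻¹` and `γ⁻²` gives `k ≤ γ⁻¹` with `‖kω‖ < γ` and
`k' ≤ γ⁻²` with `‖k'ω‖ < γ²`. Since `ω ∈ B_γ`, every `q ≤ γ⁻¹` has `‖qω‖ ≥ γ/q ≥ γ²`; hence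
`k < k'` and `‖k'ω‖ < ‖kω‖`, so from `k`, `k'` (or `k' - k`) we get `A, B ≥ 1` with
`A + B ≤ γ⁻¹ + γ⁻²` such that `Aω` lies just above and `Bω` just below an integer, both within `γ`.
Adding `A` or subtracting `B` according to whether `q` lies in the lower or the upper part of a
window of length `A + B` centred at `0` moves `qω` forward around the circle in steps shorter than
`γ`, so the walk passes within `γ` of every point.
-/

/-- `Bgamma γ` is the set of Diophantine numbers of constant type with constant `γ`:
reals `ω` with `|ω − p/q| ≥ γ/q²` for all integers `p` and positive integers `q`. -/
def Bgamma (γ : ℝ) : Set ℝ :=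
  {ω | ∀ (p : ℤ) (q : ℕ), 0 < q → γ / (q : ℝ) ^ 2 ≤ |ω - (p : ℝ) / (q : ℝ)|}

lemma distInt_le_abs_sub_intCast (x : ℝ) (n : ℤ) : distInt x ≤ |x - n| := round_le x n

lemma exists_le_le_add_of_forall_exists_step {X : Type*} (P : X → Prop) (f : X → ℝ) {ε d : ℝ}
    (hε : 0 < ε) (hstep : ∀ s, P s → ∃ s', P s' ∧ f s + ε ≤ f s' ∧ f s' ≤ f s + d)
    {s₀ : X} (hs₀ : P s₀) {t : ℝ} (ht : f s₀ ≤ t) :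
    ∃ s, P s ∧ f s ≤ t ∧ t ≤ f s + d := by
  suffices H : ∀ n : ℕ, ∀ s, P s → f s ≤ t → t ≤ f s + n * ε + d →
      ∃ s, P s ∧ f s ≤ t ∧ t ≤ f s + d by
    obtain ⟨n, hn⟩ := exists_nat_ge ((t - f s₀) / ε)
    rw [div_le_iff₀ hε] at hn
    obtain ⟨s', -, hε', hd'⟩ := hstep s₀ hs₀
    exact H n s₀ hs₀ ht (by linarith)
  intro n
  induction n with
  | zero => exact fun s hs hst hts => ⟨s, hs, hst, by simpa using hts⟩
  | succ n ih =>
    intro s hs hst hts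
    by_cases hnear : t ≤ f s + d
    · exact ⟨s, hs, hst, hnear⟩
    obtain ⟨s', hs', hε', hd'⟩ := hstep s hs
    exact ih s' hs' (by linarith) (by push_cast at hts; linarith)

theorem exists_mem_Ico_distInt_mul_sub_le (ω : ℝ) {A B pa pb L : ℤ} (hA : 0 ≤ A) (hB : 0 ≤ B)
    (hpos : 0 < A * ω - pa) (hneg : 0 < pb - B * ω) (hL : L ≤ 0) (hLAB : 0 < L + A + B) (a : ℝ) :
    ∃ q ∈ Set.Ico L (L + A + B), distInt (q * ω - a) ≤ max (A * ω - pa) (pb - B * ω) := by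
  set u := A * ω - pa
  set w := pb - B * ω
  have hstep : ∀ s : ℤ × ℤ, s.1 ∈ Set.Ico L (L + A + B) → ∃ s' : ℤ × ℤ,
      s'.1 ∈ Set.Ico L (L + A + B) ∧ s.1 * ω - s.2 + min u w ≤ s'.1 * ω - s'.2 ∧
        s'.1 * ω - s'.2 ≤ s.1 * ω - s.2 + max u w := by
    rintro ⟨q, m⟩ ⟨hLq, hqLAB⟩
    by_cases hqB : q < L + B
    · refine ⟨(q + A, m + pa), ⟨by omega, by omega⟩, ?_, ?_⟩ <;> push_cast
      · linarith [min_le_left u w]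
      · linarith [le_max_left u w]
    · refine ⟨(q - B, m - pb), ⟨by omega, by omega⟩, ?_, ?_⟩ <;> push_cast
      · linarith [min_le_right u w]
      · linarith [le_max_right u w]
  obtain ⟨⟨q, m⟩, hq, hqt, htq⟩ := exists_le_le_add_of_forall_exists_step
    (fun s : ℤ × ℤ => s.1 ∈ Set.Ico L (L + A + B)) (fun s => s.1 * ω - s.2) (lt_min hpos hneg)
    hstep (s₀ := (0, 0)) ⟨hL, hLAB⟩ (t := Int.fract a) (by simp [Int.fract_nonneg])
  refine ⟨q, hq, (distInt_le_abs_sub_intCast _ (m - ⌊a⌋)).trans ?_⟩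
  rw [abs_le]
  simp only [Int.fract] at hqt htq
  push_cast
  constructor <;> linarith

lemma div_le_abs_mul_sub_of_mem_Bgamma {γ ω : ℝ} (hω : ω ∈ Bgamma γ) {k : ℤ} (hk : 0 < k)
    (p : ℤ) : γ / k ≤ |k * ω - p| := by
  have hk' : (0 : ℝ) < k := by exact_mod_cast hk
  have h := hω p k.toNat (by omega)
  rw [show ((k.toNat : ℕ) : ℝ) = k by exact_mod_cast Int.toNat_of_nonneg hk.le] at h
  calc γ / k = γ / k ^ 2 * |(k : ℝ)| := by rw [abs_of_pos hk']; field_simp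
    _ ≤ |ω - p / k| * |(k : ℝ)| := by gcongr
    _ = |k * ω - p| := by rw [← abs_mul]; congr 1; field_simp

lemma sq_le_abs_mul_sub_of_mem_Bgamma {γ ω : ℝ} (hγ : 0 < γ) (hω : ω ∈ Bgamma γ) {k : ℤ}
    (hk : 0 < k) (hkγ : (k : ℝ) ≤ γ⁻¹) (p : ℤ) : γ ^ 2 ≤ |k * ω - p| := by
  have hk' : (0 : ℝ) < k := by exact_mod_cast hk
  calc γ ^ 2 = γ / γ⁻¹ := by field_simp
    _ ≤ γ / k := by gcongr
    _ ≤ |k * ω - p| := div_le_abs_mul_sub_of_mem_Bgamma hω hk p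

lemma exists_int_int_abs_mul_sub_lt_inv (ξ : ℝ) {M : ℝ} (hM : 1 ≤ M) :
    ∃ j k : ℤ, 0 < k ∧ (k : ℝ) ≤ M ∧ |k * ξ - j| < M⁻¹ := by
  obtain ⟨j, k, hk, hkn, hjk⟩ := Real.exists_int_int_abs_mul_sub_le ξ (Nat.floor_pos.mpr hM)
  refine ⟨j, k, hk, (Int.cast_le.mpr hkn).trans (by simpa using Nat.floor_le (by linarith)), ?_⟩
  calc |k * ξ - j| ≤ 1 / (⌊M⌋₊ + 1) := hjk
    _ < M⁻¹ := by rw [one_div]; gcongr; exact Nat.lt_floor_add_one M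

/-- When the two errors have the same sign, `k' - k` approximates from the other side. -/
lemma exists_approx_from_both_sides (ω : ℝ) {j k j' k' : ℤ} (hk : 0 < k) (hkk' : k < k')
    (hne : k' * ω - j' ≠ 0) (hlt : |k' * ω - j'| < |k * ω - j|) :
    ∃ A B pa pb : ℤ, 0 < A ∧ 0 < B ∧ A + B ≤ k + k' ∧
      0 < A * ω - pa ∧ A * ω - pa ≤ |k * ω - j| ∧ 0 < pb - B * ω ∧ pb - B * ω ≤ |k * ω - j| := by
  have hne₀ : k * ω - j ≠ 0 := abs_pos.mp ((abs_nonneg _).trans_lt hlt)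
  rcases hne₀.lt_or_gt with h₀ | h₀ <;> rcases hne.lt_or_gt with h' | h' <;>
    simp only [abs_of_neg, abs_of_pos, h₀, h'] at hlt ⊢
  · exact ⟨k' - k, k, j' - j, j, by omega, hk, by omega, by push_cast; linarith,
      by push_cast; linarith, by linarith, by linarith⟩
  · exact ⟨k', k, j', j, by omega, hk, by omega, by linarith, by linarith, by linarith, by linarith⟩
  · exact ⟨k, k', j, j', hk, by omega, by omega, h₀, le_rfl, by linarith, by linarith⟩
  · exact ⟨k, k' - k, j, j' - j, hk, by omega, by omega, h₀, le_rfl,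
      by push_cast; linarith, by push_cast; linarith⟩

/-- For `ω ∈ B_γ` with `γ ∈ (0,1]`, the finite orbit segment
`{qω mod 1 : |q| ≤ γ⁻²}` is `γ`-dense in `ℝ/ℤ`. -/
theorem finite_orbit_gamma_dense (γ : ℝ) (hγ : γ ∈ Set.Ioc (0 : ℝ) 1)
    (ω : ℝ) (hω : ω ∈ Bgamma γ) (a : ℝ) :
    ∃ q : ℤ, (|q| : ℝ) ≤ γ⁻¹ ^ 2 ∧ distInt ((q : ℝ) * ω - a) ≤ γ := by
  obtain ⟨hγ₀, hγ₁⟩ := hγ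
  have hγinv : 1 ≤ γ⁻¹ := one_le_inv₀ hγ₀ |>.mpr hγ₁
  obtain ⟨j, k, hk, hkγ, hθ⟩ := exists_int_int_abs_mul_sub_lt_inv ω hγinv
  obtain ⟨j', k', hk', hk'γ, hθ'⟩ :=
    exists_int_int_abs_mul_sub_lt_inv ω (one_le_pow₀ (n := 2) hγinv)
  rw [inv_inv] at hθ
  rw [inv_pow, inv_inv] at hθ'
  have hkk' : k < k' := by
    by_contra! hk'k
    exact (sq_le_abs_mul_sub_of_mem_Bgamma hγ₀ hω hk'
      ((Int.cast_le.mpr hk'k).trans hkγ) j').not_gt hθ'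
  have hne : k' * ω - j' ≠ 0 :=
    abs_pos.mp ((by positivity : 0 < γ / k').trans_le (div_le_abs_mul_sub_of_mem_Bgamma hω hk' j'))
  have hθ'θ : |k' * ω - j'| < |k * ω - j| :=
    hθ'.trans_le (sq_le_abs_mul_sub_of_mem_Bgamma hγ₀ hω hk hkγ j)
  obtain ⟨A, B, pa, pb, hA, hB, hAB, hu, huθ, hw, hwθ⟩ :=
    exists_approx_from_both_sides ω hk hkk' hne hθ'θ
  obtain ⟨q, ⟨hLq, hqL⟩, hq⟩ :=
    exists_mem_Ico_distInt_mul_sub_le ω hA.le hB.le hu hw (L := -((A + B) / 2)) (by omega)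
      (by omega) a
  refine ⟨q, ?_, hq.trans ((max_le huθ hwθ).trans hθ.le)⟩
  have hq2 : 2 * |q| ≤ A + B := by rw [abs_eq_max_neg]; omega
  have hq2' : 2 * |(q : ℝ)| ≤ k + k' := by exact_mod_cast hq2.trans hAB
  linarith [le_self_pow₀ hγinv two_ne_zero]
end

section
/- Let γ > 0, ω ∈ B_γ, a ∈ ℝ and ε > 0. If m and n are positive integers with ‖mω − a‖ < ε and ‖nω + a‖ < ε, then m + n > γ/(2ε). -/
/-! Adding the two near-returns gives `‖(m + n) ω‖ < 2ε`, since `‖·‖` is subadditive.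
On the other hand, for `ω ∈ B_γ` and `q > 0` the nearest integer `p` to `q ω` gives
`‖q ω‖ = q |ω - p/q| ≥ γ / q`. Hence `γ / (m + n) < 2ε`. -/

theorem distInt_add_le (x y : ℝ) : distInt (x + y) ≤ distInt x + distInt y := by
  calc distInt (x + y) ≤ |x + y - ((round x + round y : ℤ) : ℝ)| := round_le _ _
    _ = |(x - round x) + (y - round y)| := by push_cast; ring_nf
    _ ≤ distInt x + distInt y := abs_add_le _ _

theorem div_le_distInt_mul_of_mem_Bgamma {γ ω : ℝ} (hω : ω ∈ Bgamma γ) {q : ℕ} (hq : 0 < q) :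
    γ / q ≤ distInt (q * ω) := by
  have hq' : (0 : ℝ) < q := Nat.cast_pos.mpr hq
  have hdist : distInt (q * ω) = q * |ω - (round (q * ω) : ℤ) / q| := by
    rw [distInt, ← abs_of_pos hq', ← abs_mul, abs_of_pos hq', mul_sub, mul_div_cancel₀ _ hq'.ne']
  calc γ / q = q * (γ / (q : ℝ) ^ 2) := by field_simp
    _ ≤ q * |ω - (round (q * ω) : ℤ) / q| := by gcongr; exact hω _ q hq
    _ = distInt (q * ω) := hdist.symm

theorem two_collision_returns_general (γ : ℝ) (ω : ℝ) (hω : ω ∈ Bgamma γ)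
    (a ε : ℝ) (hε : 0 < ε) (m n : ℕ) (hm : 0 < m)
    (h1 : distInt ((m : ℝ) * ω - a) < ε) (h2 : distInt ((n : ℝ) * ω + a) < ε) :
    γ / (2 * ε) < (m : ℝ) + (n : ℝ) := by
  have hsum : ((m + n : ℕ) : ℝ) * ω = ((m : ℝ) * ω - a) + ((n : ℝ) * ω + a) := by
    push_cast; ring
  have hlower := div_le_distInt_mul_of_mem_Bgamma hω (Nat.add_pos_left hm n)
  have hupper : distInt (((m + n : ℕ) : ℝ) * ω) < 2 * ε := by
    rw [hsum]; linarith [distInt_add_le ((m : ℝ) * ω - a) ((n : ℝ) * ω + a)]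
  have hbound : γ / ((m + n : ℕ) : ℝ) < 2 * ε := hlower.trans_lt hupper
  rw [div_lt_iff₀ (by positivity)] at hbound
  rw [div_lt_iff₀ (by positivity)]
  push_cast at hbound
  linarith

/-- If `ω ∈ B_γ` and both `‖mω − a‖ < ε` and `‖nω + a‖ < ε` for positive integers
`m, n`, then `m + n > γ/(2ε)`. -/
theorem two_collision_returns (γ : ℝ) (hγ : 0 < γ) (ω : ℝ) (hω : ω ∈ Bgamma γ)
    (a ε : ℝ) (hε : 0 < ε) (m n : ℕ) (hm : 0 < m) (hn : 0 < n)
    (h1 : distInt ((m : ℝ) * ω - a) < ε) (h2 : distInt ((n : ℝ) * ω + a) < ε) :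
    γ / (2 * ε) < (m : ℝ) + (n : ℝ) :=
  two_collision_returns_general γ ω hω a ε hε m n hm h1 h2
end
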